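/- arXiv:1502.01003 — 3 statements merged into one kernel-verified Lean document; each statement's English description precedes it below -/
import Mathlib

section
/- Consider the quartic equation R⁴ − R² = −2m[(H − M)R + M] in the variable R, where m > 0, H > M > 0 are real constants. Then this equation has at most two real solutions in the open interval (0, 1). -/
/-!
Moving everything to one side, the horizon radii are the positive roots of
`R⁴ - R² + 2m(H - M) R + 2mM`. With `m > 0` and `H > M > 0` its coefficients have the sign
pattern `+, -, +, +`, which changes sign twice, so by Descartes' rule of signs it has at most
two positive roots, let alone roots in `(0, 1)`.
-/

open Polynomial Set

namespace Polynomial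

theorem encard_setOf_pos_isRoot_le_signVariations {R : Type*} [CommRing R]
    [LinearOrder R] [IsStrictOrderedRing R] {P : R[X]} (hP : P ≠ 0) :
    {x | 0 < x ∧ P.IsRoot x}.encard ≤ P.signVariations := by
  classical
  have hset : {x | 0 < x ∧ P.IsRoot x} = ↑(P.roots.filter (0 < ·)).toFinset := by
    ext x
    simp [mem_roots hP, and_comm]
  calc {x | 0 < x ∧ P.IsRoot x}.encard
      = ((P.roots.filter (0 < ·)).toFinset.card : ℕ∞) := by rw [hset, encard_coe_eq_coe_finsetCard]
    _ ≤ (P.roots.filter (0 < ·)).card := by exact_mod_cast Multiset.toFinset_card_le _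
    _ ≤ P.signVariations := by
      rw [← Multiset.countP_eq_card_filter]
      exact_mod_cast roots_countP_pos_le_signVariations P

end Polynomial

noncomputable def horizonPoly (a b : ℝ) : ℝ[X] := X ^ 4 - X ^ 2 + C a * X + C b

theorem degree_horizonPoly (a b : ℝ) : (horizonPoly a b).degree = 4 := by
  unfold horizonPoly
  compute_degree!

theorem horizonPoly_ne_zero (a b : ℝ) : horizonPoly a b ≠ 0 :=
  ne_zero_of_degree_gt (n := 0) (by rw [degree_horizonPoly]; decide)

theorem coeffList_horizonPoly (a b : ℝ) : (horizonPoly a b).coeffList = [1, 0, -1, a, b] := by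
  rw [coeffList, degree_horizonPoly]
  simp [horizonPoly, List.range_succ, coeff_X, coeff_C]

theorem signVariations_horizonPoly {a b : ℝ} (ha : 0 < a) (hb : 0 < b) :
    (horizonPoly a b).signVariations = 2 := by
  simp [signVariations, coeffList_horizonPoly, ha, hb, List.destutter]

/-- The apparent-horizon equation R⁴ − R² = −2m[(H − M)R + M] of generalized McVittie
(with m > 0, H > M > 0) has at most two real solutions in the open interval (0,1). -/
theorem stmt3 (m H M : ℝ) (hm : 0 < m) (hMpos : 0 < M) (hHM : M < H) :
    Set.encard {R : ℝ | R ∈ Set.Ioo (0:ℝ) 1 ∧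
      R^4 - R^2 = -(2*m) * ((H - M)*R + M)} ≤ 2 := by
  set P := horizonPoly (2 * m * (H - M)) (2 * m * M)
  have hsub : {R : ℝ | R ∈ Set.Ioo (0:ℝ) 1 ∧ R^4 - R^2 = -(2*m) * ((H - M)*R + M)} ⊆
      {x | 0 < x ∧ P.IsRoot x} := by
    rintro R ⟨hR, heq⟩
    refine ⟨hR.1, ?_⟩
    simp only [P, horizonPoly, IsRoot.def, eval_add, eval_sub, eval_mul, eval_pow, eval_X, eval_C]
    linear_combination heq
  have hsign : P.signVariations = 2 :=
    signVariations_horizonPoly (mul_pos (by positivity) (sub_pos.2 hHM)) (by positivity)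
  calc _ ≤ {x | 0 < x ∧ P.IsRoot x}.encard := encard_le_encard hsub
    _ ≤ P.signVariations := encard_setOf_pos_isRoot_le_signVariations (horizonPoly_ne_zero _ _)
    _ = 2 := by rw [hsign]; rfl
end

section
/- Let a > 0 and let ξ : [t₀,∞) → ℝ be twice continuously differentiable with ξ(t) → 0, ξ'(t) → 0, and ξ''(t) = o(ξ'(t)) as t → ∞, and suppose e^{at}ξ(t) → ∞. Then e^{−at}∫_{t₀}^t e^{au} ξ(u) du = ξ(t)/a − ξ'(t)/a² + o(ξ'(t)) as t → ∞. -/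
/-!
Integrating by parts twice,
`e^{-at} ∫_{t₀}^t e^{au} ξ = ξ/a - ξ'/a² + C e^{-at} + a⁻² e^{-at} ∫_{t₀}^t e^{au} ξ''`.
Since `ξ'' = o(ξ')`, for every `δ > 0` the function `e^{2δt} ξ'(t)²` is eventually
nondecreasing, so `ξ'` decays more slowly than every exponential once it is not eventually zero
(which `ξ → 0` and `e^{at} ξ → ∞` guarantee). Hence `C e^{-at} = o(ξ')`, and past the point `T`
where `|ξ''| ≤ δ |ξ'|` the remaining convolution is at most `δ / (a - δ) · |ξ'(t)|`.
-/

open Filter Real Set Asymptotics intervalIntegral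

lemma integral_exp_mul_le {k : ℝ} (hk : 0 < k) (s t : ℝ) :
    ∫ u in s..t, exp (k * u) ≤ exp (k * t) / k := by
  rw [integral_comp_mul_left (fun x => exp x) hk.ne', integral_exp, smul_eq_mul, inv_mul_eq_div]
  gcongr
  linarith [exp_pos (k * s)]

lemma integral_exp_mul_mul_eq {a : ℝ} (ha : a ≠ 0) {f f' : ℝ → ℝ}
    (hf : ∀ t, HasDerivAt f (f' t) t) (hf' : Continuous f') (s t : ℝ) :
    ∫ u in s..t, exp (a * u) * f u
      = (exp (a * t) * f t - exp (a * s) * f s) / a - (∫ u in s..t, exp (a * u) * f' u) / a := by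
  have hexp : ∀ x, HasDerivAt (fun u => exp (a * u) / a) (exp (a * x)) x := fun x => by
    refine (((hasDerivAt_id' x).const_mul a).exp.div_const a).congr_deriv ?_
    field_simp
  have h := integral_mul_deriv_eq_deriv_mul (fun x _ => hf x) (fun x _ => hexp x)
    (hf'.intervalIntegrable s t)
    ((by fun_prop : Continuous fun u => exp (a * u)).intervalIntegrable s t)
  simp only [mul_comm (exp _)] at h ⊢
  rw [h, ← integral_div]
  simp only [mul_div_assoc]
  ring

section SlowDecay

variable {f f' : ℝ → ℝ}

lemma frequently_deriv_ne_zero_of_tendsto_zero (hf : ∀ t, HasDerivAt f (f' t) t)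
    (hlim : Tendsto f atTop (nhds 0)) (hne : ∃ᶠ t in atTop, f t ≠ 0) :
    ∃ᶠ t in atTop, f' t ≠ 0 := by
  intro hzero
  obtain ⟨S, hS⟩ := eventually_atTop.1 hzero
  have hconst : ∀ t ≥ S, f t = f S := fun t ht => by
    have := (convex_Ici S).norm_image_sub_le_of_norm_hasDerivWithin_le (C := 0)
      (fun x _ => (hf x).hasDerivWithinAt) (fun x hx => by simp [not_not.1 (hS x hx)])
      self_mem_Ici ht
    simpa [sub_eq_zero] using this
  have hS0 : f S = 0 := tendsto_nhds_unique
    (tendsto_const_nhds.congr' (eventually_atTop.2 ⟨S, fun t ht => (hconst t ht).symm⟩)) hlim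
  exact hne (eventually_atTop.2 ⟨S, fun t ht => by simp [hconst t ht, hS0]⟩)

lemma abs_le_abs_mul_exp_of_abs_deriv_le (hf : ∀ t, HasDerivAt f (f' t) t)
    {δ T : ℝ} (hb : ∀ s ≥ T, |f' s| ≤ δ * |f s|) {u t : ℝ} (hu : T ≤ u) (hut : u ≤ t) :
    |f u| ≤ |f t| * exp (δ * (t - u)) := by
  have hderiv : ∀ s, HasDerivAt (fun s => exp (2 * δ * s) * f s ^ 2)
      (exp (2 * δ * s) * (2 * δ * f s ^ 2 + 2 * (f s * f' s))) s := fun s => by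
    refine (((hasDerivAt_id' s).const_mul (2 * δ)).exp.mul ((hf s).fun_pow 2)).congr_deriv ?_
    push_cast
    ring
  have hmono : MonotoneOn (fun s => exp (2 * δ * s) * f s ^ 2) (Ici T) := by
    refine monotoneOn_of_deriv_nonneg (convex_Ici T)
      (fun s _ => (hderiv s).continuousAt.continuousWithinAt)
      (fun s _ => (hderiv s).differentiableAt.differentiableWithinAt) fun s hs => ?_
    rw [interior_Ici] at hs
    rw [(hderiv s).deriv]
    have hprod : |f s * f' s| ≤ δ * f s ^ 2 := by
      rw [abs_mul, ← sq_abs (f s)]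
      nlinarith [hb s hs.le, abs_nonneg (f s)]
    exact mul_nonneg (exp_pos _).le (by linarith [neg_abs_le (f s * f' s)])
  have h : exp (2 * δ * u) * f u ^ 2 ≤ exp (2 * δ * t) * f t ^ 2 :=
    hmono hu (hu.trans hut) hut
  have hsq : f u ^ 2 ≤ (|f t| * exp (δ * (t - u))) ^ 2 :=
    calc f u ^ 2 = exp (2 * δ * u) * f u ^ 2 * exp (-(2 * δ * u)) := by
          rw [mul_right_comm, ← exp_add]; simp
      _ ≤ exp (2 * δ * t) * f t ^ 2 * exp (-(2 * δ * u)) := by gcongr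
      _ = (|f t| * exp (δ * (t - u))) ^ 2 := by
          rw [mul_pow, sq_abs, sq (exp _), ← exp_add, mul_right_comm, ← exp_add]; ring_nf
  simpa [abs_of_nonneg (by positivity : 0 ≤ |f t| * exp (δ * (t - u)))] using sq_le_sq.1 hsq

lemma isBigO_exp_neg_mul_of_isLittleO_deriv (hf : ∀ t, HasDerivAt f (f' t) t)
    (hf' : f' =o[atTop] f) (hfreq : ∃ᶠ t in atTop, f t ≠ 0) {δ : ℝ} (hδ : 0 < δ) :
    (fun t => exp (-δ * t)) =O[atTop] f := by
  obtain ⟨T₁, hT₁⟩ := eventually_atTop.1 (hf'.def hδ)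
  obtain ⟨T, hfT, hT⟩ := (hfreq.and_eventually (eventually_ge_atTop T₁)).exists
  refine IsBigO.of_bound (exp (-δ * T) / |f T|) (eventually_atTop.2 ⟨T, fun t ht => ?_⟩)
  have hgrow := abs_le_abs_mul_exp_of_abs_deriv_le hf (fun s hs => hT₁ s hs) hT ht
  rw [norm_of_nonneg (exp_pos _).le, norm_eq_abs, div_mul_eq_mul_div,
    le_div_iff₀ (abs_pos.2 hfT)]
  calc exp (-δ * t) * |f T| ≤ exp (-δ * t) * (|f t| * exp (δ * (t - T))) := by gcongr
    _ = exp (-δ * T) * |f t| := by rw [mul_left_comm, ← exp_add]; ring_nf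

lemma isLittleO_exp_neg_mul_of_isLittleO_deriv (hf : ∀ t, HasDerivAt f (f' t) t)
    (hf' : f' =o[atTop] f) (hfreq : ∃ᶠ t in atTop, f t ≠ 0) {a : ℝ} (ha : 0 < a) :
    (fun t => exp (-a * t)) =o[atTop] f := by
  refine (isLittleO_exp_comp_exp_comp.2 ?_).trans_isBigO
    (isBigO_exp_neg_mul_of_isLittleO_deriv hf hf' hfreq (half_pos ha))
  refine (tendsto_id.const_mul_atTop (half_pos ha)).congr fun t => ?_
  simp only [id]
  ring

lemma abs_integral_exp_mul_le (hf : ∀ t, HasDerivAt f (f' t) t) {g : ℝ → ℝ}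
    {a δ T : ℝ} (hδ : 0 < δ) (hδa : δ < a) (hf' : ∀ s ≥ T, |f' s| ≤ δ * |f s|)
    (hgf : ∀ s ≥ T, |g s| ≤ δ * |f s|) {t : ℝ} (ht : T ≤ t) :
    |∫ u in T..t, exp (a * u) * g u| ≤ δ / (a - δ) * (exp (a * t) * |f t|) := by
  have hpoint : ∀ u ∈ Ioc T t,
      ‖exp (a * u) * g u‖ ≤ δ * |f t| * exp (δ * t) * exp ((a - δ) * u) :=
    fun u hu => calc
      ‖exp (a * u) * g u‖ = exp (a * u) * |g u| := by
        rw [norm_mul, norm_of_nonneg (exp_pos _).le, norm_eq_abs]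
      _ ≤ exp (a * u) * (δ * (|f t| * exp (δ * (t - u)))) := by
        gcongr
        exact (hgf u hu.1.le).trans
          (by gcongr; exact abs_le_abs_mul_exp_of_abs_deriv_le hf hf' hu.1.le hu.2)
      _ = δ * |f t| * exp (δ * t) * exp ((a - δ) * u) := by
        have hsplit : exp (a * u) * exp (δ * (t - u)) = exp (δ * t) * exp ((a - δ) * u) := by
          rw [← exp_add, ← exp_add]; ring_nf
        linear_combination (δ * |f t|) * hsplit
  calc |∫ u in T..t, exp (a * u) * g u|
      ≤ ∫ u in T..t, δ * |f t| * exp (δ * t) * exp ((a - δ) * u) :=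
        norm_integral_le_of_norm_le ht (Eventually.of_forall hpoint)
          (Continuous.intervalIntegrable (by fun_prop) _ _)
    _ = δ * |f t| * exp (δ * t) * ∫ u in T..t, exp ((a - δ) * u) := integral_const_mul _ _
    _ ≤ δ * |f t| * exp (δ * t) * (exp ((a - δ) * t) / (a - δ)) := by
        gcongr; exact integral_exp_mul_le (sub_pos.2 hδa) T t
    _ = δ / (a - δ) * (exp (a * t) * |f t|) := by
        rw [show a * t = δ * t + (a - δ) * t by ring, exp_add]; ring

lemma isLittleO_exp_neg_mul_integral_exp_mul (hf : ∀ t, HasDerivAt f (f' t) t)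
    (hf' : f' =o[atTop] f) (hfreq : ∃ᶠ t in atTop, f t ≠ 0) {a : ℝ} (ha : 0 < a)
    {g : ℝ → ℝ} (hg : Continuous g) (hgf : g =o[atTop] f) (t₀ : ℝ) :
    (fun t => exp (-a * t) * ∫ u in t₀..t, exp (a * u) * g u) =o[atTop] f := by
  refine isLittleO_iff.2 fun c hc => ?_
  set δ := a * c / (c + 2)
  have hδ : 0 < δ := by positivity
  have hδa : δ < a := by rw [div_lt_iff₀ (by positivity)]; nlinarith
  have hδc : δ / (a - δ) = c / 2 := by
    simp only [δ]; field_simp; ring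
  obtain ⟨T, hT⟩ := eventually_atTop.1 ((hf'.def hδ).and (hgf.def hδ))
  set K := ∫ u in t₀..T, exp (a * u) * g u
  have hhead := ((isLittleO_exp_neg_mul_of_isLittleO_deriv hf hf' hfreq ha).const_mul_left K).def
    (half_pos hc)
  filter_upwards [hhead, eventually_ge_atTop T] with t hKt hTt
  have hint : ∀ s₁ s₂,
      IntervalIntegrable (fun u => exp (a * u) * g u) MeasureTheory.volume s₁ s₂ :=
    fun _ _ => Continuous.intervalIntegrable (by fun_prop) _ _
  have htail := abs_integral_exp_mul_le hf hδ hδa (fun s hs => (hT s hs).1)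
    (fun s hs => (hT s hs).2) hTt
  have he : 0 < exp (-a * t) := exp_pos _
  rw [norm_mul, norm_of_nonneg he.le, norm_eq_abs, norm_eq_abs, mul_comm] at hKt
  rw [hδc] at htail
  rw [norm_eq_abs, norm_eq_abs, ← integral_add_adjacent_intervals (hint t₀ T) (hint T t),
    mul_add]
  calc |exp (-a * t) * K + exp (-a * t) * ∫ u in T..t, exp (a * u) * g u|
      ≤ exp (-a * t) * |K| + exp (-a * t) * |∫ u in T..t, exp (a * u) * g u| :=
        (abs_add_le _ _).trans_eq (by rw [abs_mul, abs_mul, abs_of_pos he])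
    _ ≤ c / 2 * |f t| + exp (-a * t) * (c / 2 * (exp (a * t) * |f t|)) := by gcongr
    _ = c * |f t| := by
        have hexp : exp (-a * t) * exp (a * t) = 1 := by rw [← exp_add]; simp
        linear_combination (c / 2 * |f t|) * hexp

end SlowDecay

theorem stmt12_general (a t₀ : ℝ) (ha : 0 < a)
    (ξ ξ' ξ'' : ℝ → ℝ)
    (hd1 : ∀ t, HasDerivAt ξ (ξ' t) t)
    (hd2 : ∀ t, HasDerivAt ξ' (ξ'' t) t)
    (hc2 : Continuous ξ'')
    (hlim0 : Tendsto ξ atTop (nhds 0))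
    (hsmall : ξ'' =o[atTop] ξ')
    (hslow : Tendsto (fun t => Real.exp (a*t) * ξ t) atTop atTop) :
    (fun t => Real.exp (-a*t) * (∫ u in t₀..t, Real.exp (a*u) * ξ u)
      - (ξ t / a - ξ' t / a^2)) =o[atTop] ξ' := by
  have hc1 : Continuous ξ' := continuous_iff_continuousAt.2 fun t => (hd2 t).continuousAt
  have hξ : ∃ᶠ t in atTop, ξ t ≠ 0 :=
    (hslow.eventually_ne_atTop 0).frequently.mono fun _ => right_ne_zero_of_mul
  have hfreq := frequently_deriv_ne_zero_of_tendsto_zero hd1 hlim0 hξ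
  have hexpand : (fun t => exp (-a * t) * (∫ u in t₀..t, exp (a * u) * ξ u)
      - (ξ t / a - ξ' t / a ^ 2))
      = fun t => exp (a * t₀) * (ξ' t₀ / a ^ 2 - ξ t₀ / a) * exp (-a * t)
        + 1 / a ^ 2 * (exp (-a * t) * ∫ u in t₀..t, exp (a * u) * ξ'' u) := by
    funext t
    rw [integral_exp_mul_mul_eq ha.ne' hd1 hc1, integral_exp_mul_mul_eq ha.ne' hd2 hc2]
    have hexp : exp (-a * t) * exp (a * t) = 1 := by rw [← exp_add]; simp
    linear_combination (ξ t / a - ξ' t / a ^ 2) * hexp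
  rw [hexpand]
  exact ((isLittleO_exp_neg_mul_of_isLittleO_deriv hd2 hsmall hfreq ha).const_mul_left _).add
    ((isLittleO_exp_neg_mul_integral_exp_mul hd2 hsmall hfreq ha hc2 hsmall t₀).const_mul_left _)

/-- Two-term asymptotic expansion (Eq. A2 / Eq. 27): when ξ decays slower than e^{−at}
and ξ'' = o(ξ'), we have e^{−at}∫_{t₀}^t e^{au}ξ(u)du = ξ(t)/a − ξ'(t)/a² + o(ξ'(t)). -/
theorem stmt12 (a t₀ : ℝ) (ha : 0 < a)
    (ξ ξ' ξ'' : ℝ → ℝ)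
    (hd1 : ∀ t, HasDerivAt ξ (ξ' t) t)
    (hd2 : ∀ t, HasDerivAt ξ' (ξ'' t) t)
    (hc2 : Continuous ξ'')
    (hlim0 : Tendsto ξ atTop (nhds 0))
    (hlim1 : Tendsto ξ' atTop (nhds 0))
    (hsmall : ξ'' =o[atTop] ξ')
    (hslow : Tendsto (fun t => Real.exp (a*t) * ξ t) atTop atTop) :
    (fun t => Real.exp (-a*t) * (∫ u in t₀..t, Real.exp (a*u) * ξ u)
      - (ξ t / a - ξ' t / a^2)) =o[atTop] ξ' :=
  stmt12_general a t₀ ha ξ ξ' ξ'' hd1 hd2 hc2 hlim0 hsmall hslow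
end

section
/- Also, monotone convergence of L(t₀): under the hypotheses of the previous statement, lim_{t₀→∞} ∫_{t₀}^∞ e^{(β+σ)u} ξ(u) du = 0; hence for every z₀ > 0 there exists T > 0 such that for all t₀ > T the function z₋ with initial condition z₋(t₀)=z₀ satisfies z₋(t) > 0 for all t ≥ t₀. -/
open Filter Real Set intervalIntegral

/-!
A convergent improper integral `∫_{T₀}^∞ f` has Cauchy partial integrals, so once `t₀` is late
enough every `∫_{t₀}^t f` with `t ≥ t₀` exceeds `-z₀ / R∞`; for `t₀ > 0` the initial term
`z₀ e^{(β+σ)t₀}` is at least `z₀`, which absorbs it.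
-/

theorem eventually_norm_integral_lt_of_tendsto {E : Type*} [NormedAddCommGroup E]
    [NormedSpace ℝ E] {f : ℝ → E} {a : ℝ} {L : E}
    (hf : ∀ b ≥ a, IntervalIntegrable f MeasureTheory.volume a b)
    (hL : Tendsto (fun t => ∫ u in a..t, f u) atTop (nhds L)) {ε : ℝ} (hε : 0 < ε) :
    ∀ᶠ s in atTop, ∀ t ≥ s, ‖∫ u in s..t, f u‖ < ε := by
  obtain ⟨T, hT⟩ := eventually_atTop.1 (Metric.tendsto_nhds.1 hL (ε / 2) (half_pos hε))
  filter_upwards [eventually_ge_atTop (max T a)] with s hs t hst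
  have hsT : T ≤ s := le_of_max_le_left hs
  have hsa : a ≤ s := le_of_max_le_right hs
  rw [← integral_interval_sub_left (hf t (hsa.trans hst)) (hf s hsa), ← dist_eq_norm]
  calc dist (∫ u in a..t, f u) (∫ u in a..s, f u)
      ≤ dist (∫ u in a..t, f u) L + dist (∫ u in a..s, f u) L := dist_triangle_right _ _ _
    _ < ε / 2 + ε / 2 := add_lt_add (hT t (hsT.trans hst)) (hT s hsT)
    _ = ε := add_halves ε

theorem stmt16_general (β σ Rinf T₀ L : ℝ) (hβ : 0 < β) (hσ : 0 < σ) (hR : 0 < Rinf)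
    (ξ : ℝ → ℝ) (hξc : ContinuousOn ξ (Set.Ici T₀))
    (hconv : Tendsto (fun t => ∫ u in T₀..t, Real.exp ((β + σ)*u) * ξ u) atTop (nhds L)) :
    Tendsto (fun t₀ => L - ∫ u in T₀..t₀, Real.exp ((β + σ)*u) * ξ u) atTop (nhds 0) ∧
    ∀ z₀ > 0, ∃ T > (0:ℝ), ∀ t₀ > T, ∀ t ≥ t₀,
      0 < Real.exp (-(β + σ)*t) *
        (Rinf * (∫ u in t₀..t, Real.exp ((β + σ)*u) * ξ u) + z₀ * Real.exp ((β + σ)*t₀)) := by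
  refine ⟨by simpa using hconv.const_sub L, fun z₀ hz₀ => ?_⟩
  have hcont : ContinuousOn (fun u => Real.exp ((β + σ) * u) * ξ u) (Ici T₀) :=
    (by fun_prop : Continuous fun u => Real.exp ((β + σ) * u)).continuousOn.mul hξc
  have hint : ∀ b ≥ T₀, IntervalIntegrable (fun u => Real.exp ((β + σ) * u) * ξ u)
      MeasureTheory.volume T₀ b := fun b hb =>
    (hcont.mono Icc_subset_Ici_self).intervalIntegrable_of_Icc hb
  obtain ⟨T₁, hT₁⟩ :=
    eventually_atTop.1 (eventually_norm_integral_lt_of_tendsto hint hconv (div_pos hz₀ hR))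
  refine ⟨max T₁ 0 + 1, by positivity, fun t₀ ht₀ t ht => mul_pos (exp_pos _) ?_⟩
  have htail := mul_lt_mul_of_pos_left
    (abs_lt.1 (hT₁ t₀ (by linarith [le_max_left T₁ 0]) t ht)).1 hR
  rw [mul_neg, mul_div_cancel₀ _ hR.ne'] at htail
  have hexp : 1 ≤ Real.exp ((β + σ) * t₀) :=
    one_le_exp (by nlinarith [le_max_right T₁ 0])
  nlinarith

/-- Tail of a convergent improper integral tends to zero: the tail
L − ∫_{T₀}^{t₀} e^{(β+σ)u}ξ(u)du → 0 as t₀ → ∞; hence for every z₀ > 0 all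
sufficiently late lower approximants stay positive. -/
theorem stmt16 (β σ Rinf T₀ L : ℝ) (hβ : 0 < β) (hσ : 0 < σ) (hR : 0 < Rinf)
    (ξ : ℝ → ℝ) (hξc : ContinuousOn ξ (Set.Ici T₀)) (hξneg : ∀ t ≥ T₀, ξ t < 0)
    (hconv : Tendsto (fun t => ∫ u in T₀..t, Real.exp ((β + σ)*u) * ξ u) atTop (nhds L)) :
    Tendsto (fun t₀ => L - ∫ u in T₀..t₀, Real.exp ((β + σ)*u) * ξ u) atTop (nhds 0) ∧
    ∀ z₀ > 0, ∃ T > (0:ℝ), ∀ t₀ > T, ∀ t ≥ t₀,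
      0 < Real.exp (-(β + σ)*t) *
        (Rinf * (∫ u in t₀..t, Real.exp ((β + σ)*u) * ξ u) + z₀ * Real.exp ((β + σ)*t₀)) :=
  stmt16_general β σ Rinf T₀ L hβ hσ hR ξ hξc hconv
end
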